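/- arXiv:1802.03046 — 6 statements merged into one kernel-verified Lean document; each statement's English description precedes it below -/
import Mathlib

section
/- Suppose the zero duality gap property holds for the augmented Lagrangian, i.e. f* = sup{ψ(λ,r) : λ ∈ Λ, r ≥ 0}. Then for any globally optimal solution (λ*, r*) of the augmented dual problem (i.e. ψ(λ*, r*) ≥ ψ(λ, r) for all λ ∈ Λ and r ≥ 0), the vector λ* is an augmented Lagrange multiplier of the problem of minimizing f over A, and r* ≥ r(λ*). -/
open Filter Topology Bornology Set

noncomputable section

/-- The augmented Lagrangian `𝓛(x, λ, r) = inf_p (Φ(x,p) − ⟨λ,p⟩ + r σ(p))`. -/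
def AugLagr {X P L : Type*} [AddCommGroup P] [Module ℝ P] [AddCommGroup L] [Module ℝ L]
    (Φ : X × P → EReal) (B : L →ₗ[ℝ] P →ₗ[ℝ] ℝ) (σ : P → EReal)
    (x : X) (lam : L) (r : ℝ) : EReal :=
  ⨅ p : P, Φ (x, p) - ((B lam p : ℝ) : EReal) + (r : EReal) * σ p

/-- The optimal value (perturbation) function `v(p) = inf_{x ∈ A} Φ(x,p)`. -/
def OptVal {X P : Type*} (A : Set X) (Φ : X × P → EReal) (p : P) : EReal :=
  ⨅ x ∈ A, Φ (x, p)

/-- `λ` is an augmented Lagrange multiplier: for some `r ≥ 0`,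
`v(p) ≥ v(0) + ⟨λ,p⟩ − r σ(p)` for all `p`. -/
def IsAugMult {X P L : Type*} [AddCommGroup P] [Module ℝ P] [AddCommGroup L] [Module ℝ L]
    (A : Set X) (Φ : X × P → EReal) (B : L →ₗ[ℝ] P →ₗ[ℝ] ℝ) (σ : P → EReal) (lam : L) : Prop :=
  ∃ r : ℝ, 0 ≤ r ∧
    ∀ p : P, OptVal A Φ 0 + ((B lam p : ℝ) : EReal) - (r : EReal) * σ p ≤ OptVal A Φ p

/-- The least exact penalty parameter `r(λ)`. -/
def rmin {X P L : Type*} [AddCommGroup P] [Module ℝ P] [AddCommGroup L] [Module ℝ L]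
    (A : Set X) (Φ : X × P → EReal) (B : L →ₗ[ℝ] P →ₗ[ℝ] ℝ) (σ : P → EReal) (lam : L) : ℝ :=
  sInf {r : ℝ | 0 ≤ r ∧
    ∀ p : P, OptVal A Φ 0 + ((B lam p : ℝ) : EReal) - (r : EReal) * σ p ≤ OptVal A Φ p}

/-- The augmented dual function `ψ(λ, r) = inf_{x ∈ A} 𝓛(x, λ, r)`. -/
def DualFun {X P L : Type*} [AddCommGroup P] [Module ℝ P] [AddCommGroup L] [Module ℝ L]
    (A : Set X) (Φ : X × P → EReal) (B : L →ₗ[ℝ] P →ₗ[ℝ] ℝ) (σ : P → EReal)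
    (lam : L) (r : ℝ) : EReal :=
  ⨅ x ∈ A, AugLagr Φ B σ x lam r

/-- `λ` is a local augmented Lagrange multiplier at `xs`. -/
def IsLocalAugMult {X P L : Type*} [TopologicalSpace X]
    [AddCommGroup P] [Module ℝ P] [AddCommGroup L] [Module ℝ L]
    (A : Set X) (f : X → EReal) (Φ : X × P → EReal)
    (B : L →ₗ[ℝ] P →ₗ[ℝ] ℝ) (σ : P → EReal) (xs : X) (lam : L) : Prop :=
  ∃ r₀ : ℝ, 0 ≤ r₀ ∧ ∀ r : ℝ, r₀ ≤ r →
    (∃ U ∈ 𝓝 xs, ∀ x ∈ U ∩ A, AugLagr Φ B σ xs lam r ≤ AugLagr Φ B σ x lam r) ∧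
    AugLagr Φ B σ xs lam r = f xs

/-- `𝒜_loc`: the set of multipliers that are local augmented Lagrange multipliers at every
globally optimal solution of the problem. -/
def Aloc {X P L : Type*} [TopologicalSpace X]
    [AddCommGroup P] [Module ℝ P] [AddCommGroup L] [Module ℝ L]
    (A : Set X) (f : X → EReal) (Φ : X × P → EReal)
    (B : L →ₗ[ℝ] P →ₗ[ℝ] ℝ) (σ : P → EReal) : Set L :=
  {lam | ∀ xs ∈ A, (∀ x ∈ A, f xs ≤ f x) → IsLocalAugMult A f Φ B σ xs lam}

/-- If the zero duality gap property holds, then for any globally optimal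
solution `(λ*, r*)` of the augmented dual problem, `λ*` is an augmented Lagrange multiplier
and `r* ≥ r(λ*)`. -/
theorem dual_optimal_implies_aug_mult
    {X P L : Type*} [TopologicalSpace X]
    [AddCommGroup P] [Module ℝ P] [TopologicalSpace P]
    [AddCommGroup L] [Module ℝ L]
    (A : Set X) (f : X → EReal) (Φ : X × P → EReal)
    (B : L →ₗ[ℝ] P →ₗ[ℝ] ℝ) (σ : P → EReal)
    (hA : A.Nonempty) (hdom : ∃ x ∈ A, f x ≠ ⊤) (hfbot : ∀ x, f x ≠ ⊥)
    (hfin : ∃ c : ℝ, (⨅ x ∈ A, f x) = (c : EReal))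
    (hΦ : ∀ x, Φ (x, 0) = f x)
    (hσ0 : σ (0 : P) = 0) (hσpos : ∀ p : P, p ≠ 0 → 0 < σ p)
    (hgap : (⨅ x ∈ A, f x) = ⨆ (lam : L) (r : ℝ) (_ : 0 ≤ r), DualFun A Φ B σ lam r)
    (lstar : L) (rstar : ℝ) (hrstar : 0 ≤ rstar)
    (hopt : ∀ (lam : L) (r : ℝ), 0 ≤ r → DualFun A Φ B σ lam r ≤ DualFun A Φ B σ lstar rstar) :
    IsAugMult A Φ B σ lstar ∧ rmin A Φ B σ lstar ≤ rstar := by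
  obtain ⟨c, hc⟩ := hfin
  -- ψ(λ*, r*) = c
  have hpsi : DualFun A Φ B σ lstar rstar = (c : EReal) := by
    have h1 : (⨆ (lam : L) (r : ℝ) (_ : 0 ≤ r), DualFun A Φ B σ lam r)
        = DualFun A Φ B σ lstar rstar := by
      apply le_antisymm
      · exact iSup_le fun lam => iSup_le fun r => iSup_le fun hr => hopt lam r hr
      · exact le_iSup_of_le lstar (le_iSup_of_le rstar (le_iSup_of_le hrstar le_rfl))
    rw [← h1, ← hgap, hc]
  -- key pointwise inequality
  have key : ∀ p : P, ∀ x ∈ A,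
      (c : EReal) + ((B lstar p : ℝ) : EReal) - (rstar : EReal) * σ p ≤ Φ (x, p) := by
    intro p x hx
    have h2 : (c : EReal) ≤ Φ (x, p) - ((B lstar p : ℝ) : EReal) + (rstar : EReal) * σ p := by
      rw [← hpsi]
      refine le_trans (iInf₂_le x hx) ?_
      exact iInf_le _ p
    have hs : (0 : EReal) ≤ (rstar : EReal) * σ p := by
      apply mul_nonneg
      · exact_mod_cast hrstar
      · rcases eq_or_ne p 0 with rfl | hp
        · rw [hσ0]
        · exact le_of_lt (hσpos p hp)
    set s := (rstar : EReal) * σ p with hsdef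
    clear_value s
    set q := Φ (x, p) with hq
    clear_value q
    induction s with
    | bot => exact absurd hs (by simp)
    | top => rw [EReal.sub_top]; exact bot_le
    | coe t =>
      induction q with
      | bot => rw [EReal.bot_sub, EReal.bot_add] at h2; exact absurd h2 (by simp)
      | top => exact le_top
      | coe a =>
        rw [show ((a : EReal) - ((B lstar p : ℝ) : EReal) + (t : EReal))
            = (((a - B lstar p + t : ℝ)) : EReal) by push_cast; ring] at h2
        rw [show ((c : EReal) + ((B lstar p : ℝ) : EReal) - (t : EReal))
            = (((c + B lstar p - t : ℝ)) : EReal) by push_cast; ring]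
        have := EReal.coe_le_coe_iff.mp h2
        exact EReal.coe_le_coe_iff.mpr (by linarith)
  have hOpt0 : OptVal A Φ 0 = (c : EReal) := by
    rw [OptVal, ← hc]
    exact iInf_congr fun x => iInf_congr fun _ => hΦ x
  have hmem : 0 ≤ rstar ∧
      ∀ p : P, OptVal A Φ 0 + ((B lstar p : ℝ) : EReal) - (rstar : EReal) * σ p
        ≤ OptVal A Φ p := by
    refine ⟨hrstar, fun p => ?_⟩
    rw [hOpt0]
    exact le_iInf₂ fun x hx => key p x hx
  constructor
  · exact ⟨rstar, hmem⟩
  · exact csInf_le ⟨0, fun r hr => hr.1⟩ hmem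
end
end

section
/- If a pair (x*, λ*) with x* ∈ A is a global saddle point of the augmented Lagrangian 𝓛(·,·,r) for some r ≥ 0, i.e. sup_{λ ∈ Λ} 𝓛(x*, λ, r) = 𝓛(x*, λ*, r) = inf_{x ∈ A} 𝓛(x, λ*, r), and moreover 𝓛(x*, λ*, r) = f*, then λ* is an augmented Lagrange multiplier of the problem of minimizing f over A. -/
open Filter Topology Bornology Set

noncomputable section

/-- If `(x*, λ*)` with `x* ∈ A` is a global saddle point of `𝓛(·,·,r)` for
some `r ≥ 0` and `𝓛(x*, λ*, r) = f*`, then `λ*` is an augmented Lagrange multiplier. -/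
theorem global_saddle_point_implies_aug_mult
    {X P L : Type*} [TopologicalSpace X]
    [AddCommGroup P] [Module ℝ P] [TopologicalSpace P]
    [AddCommGroup L] [Module ℝ L]
    (A : Set X) (f : X → EReal) (Φ : X × P → EReal)
    (B : L →ₗ[ℝ] P →ₗ[ℝ] ℝ) (σ : P → EReal)
    (hA : A.Nonempty) (hdom : ∃ x ∈ A, f x ≠ ⊤) (hfbot : ∀ x, f x ≠ ⊥)
    (hfin : ∃ c : ℝ, (⨅ x ∈ A, f x) = (c : EReal))
    (hΦ : ∀ x, Φ (x, 0) = f x)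
    (hσ0 : σ (0 : P) = 0) (hσpos : ∀ p : P, p ≠ 0 → 0 < σ p)
    (xstar : X) (lstar : L) (r : ℝ) (hr : 0 ≤ r) (hxA : xstar ∈ A)
    (hsaddle₁ : (⨆ lam : L, AugLagr Φ B σ xstar lam r) = AugLagr Φ B σ xstar lstar r)
    (hsaddle₂ : AugLagr Φ B σ xstar lstar r = ⨅ x ∈ A, AugLagr Φ B σ x lstar r)
    (hval : AugLagr Φ B σ xstar lstar r = ⨅ x ∈ A, f x) :
    IsAugMult A Φ B σ lstar := by
  obtain ⟨c₀, hc₀⟩ := hfin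
  have hinf : (⨅ x ∈ A, AugLagr Φ B σ x lstar r) = (c₀ : EReal) := by
    rw [← hsaddle₂, hval, hc₀]
  have key : ∀ x ∈ A, (c₀ : EReal) ≤ AugLagr Φ B σ x lstar r := by
    intro x hx
    rw [← hinf]
    exact iInf₂_le x hx
  have hv0 : OptVal A Φ 0 = (c₀ : EReal) := by
    unfold OptVal
    simp only [hΦ]
    exact hc₀
  refine ⟨r, hr, fun p => ?_⟩
  rw [hv0]
  have hσ : (0 : EReal) ≤ σ p := by
    rcases eq_or_ne p 0 with h | h
    · rw [h, hσ0]
    · exact (hσpos p h).le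
  have hs : (0 : EReal) ≤ (r : EReal) * σ p := mul_nonneg (by exact_mod_cast hr) hσ
  set b : ℝ := B lstar p with hb
  rcases eq_or_ne ((r : EReal) * σ p) ⊤ with hT | hT
  · rw [hT, EReal.sub_top]
    exact bot_le
  · have hnB : ((r : EReal) * σ p) ≠ ⊥ := ne_of_gt (lt_of_lt_of_le (by simp) hs)
    lift ((r : EReal) * σ p) to ℝ using ⟨hT, hnB⟩ with t ht
    refine le_iInf₂ fun x hx => ?_
    have h1 : (c₀ : EReal) ≤ Φ (x, p) - (b : EReal) + (t : EReal) := by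
      have := key x hx
      refine this.trans ?_
      unfold AugLagr
      rw [ht]
      exact iInf_le _ p
    rcases eq_or_ne (Φ (x, p)) ⊤ with hp | hpT
    · rw [hp]; exact le_top
    rcases eq_or_ne (Φ (x, p)) ⊥ with hp | hpB
    · rw [hp] at h1
      have : (⊥ : EReal) - (b : EReal) + (t : EReal) = ⊥ := by
        rw [EReal.bot_sub, EReal.bot_add]
      rw [this] at h1
      exact absurd h1 (by simp)
    lift Φ (x, p) to ℝ using ⟨hpT, hpB⟩ with y hy
    have h2 : c₀ ≤ y - b + t := by exact_mod_cast h1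
    have : (c₀ : EReal) + (b : EReal) - (t : EReal) = ((c₀ + b - t : ℝ) : EReal) := by
      push_cast; rfl
    rw [this]
    exact_mod_cast (by linarith : c₀ + b - t ≤ y)
end
end

section
/- Let P be a normed space, suppose that for every λ ∈ Λ there exists d(λ) ≥ 0 with |⟨λ,p⟩| ≤ d(λ)‖p‖ for all p ∈ P, and let σ(p) = ‖p‖ (the sharp Lagrangian). Then an augmented Lagrange multiplier of the problem of minimizing f over A exists if and only if the penalty function F(x,r) := inf_{p ∈ P} (Φ(x,p) + r‖p‖) is exact, i.e. there exists r ≥ 0 such that F(x,r) ≥ f* for all x ∈ A. -/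
/-!
Since `|⟨λ,p⟩| ≤ d‖p‖`, the linear term of a multiplier can be absorbed into the sharp augmenting
term: if `λ` is an augmented Lagrange multiplier with parameter `r`, then so is `0`, with parameter
`r + d`. For `λ = 0` the multiplier inequality `v(0) − r‖p‖ ≤ v(p) = inf_{x ∈ A} Φ(x,p)` for all `p`
says, with the two infima exchanged, exactly that the penalty function is exact with parameter `r`.
-/

open Filter Topology Bornology Set

noncomputable section

section RealAugmentingFunction

variable {X P L : Type*} [AddCommGroup P] [Module ℝ P] [AddCommGroup L] [Module ℝ L]
  (A : Set X) (Φ : X × P → EReal) (B : L →ₗ[ℝ] P →ₗ[ℝ] ℝ) (σ : P → ℝ)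

theorem isAugMult_zero_iff :
    IsAugMult A Φ B (fun p => (σ p : EReal)) 0 ↔
      ∃ r : ℝ, 0 ≤ r ∧ ∀ x ∈ A, OptVal A Φ 0 ≤ ⨅ p, Φ (x, p) + (r : EReal) * (σ p : EReal) := by
  refine exists_congr fun r => and_congr_right fun _ => ?_
  simp only [map_zero, LinearMap.zero_apply, EReal.coe_zero, add_zero, ← EReal.coe_mul]
  generalize OptVal A Φ 0 = v₀
  have sub_le_iff (b : ℝ) (e : EReal) : v₀ - b ≤ e ↔ v₀ ≤ e + b :=
    EReal.sub_le_iff_le_add (.inl (EReal.coe_ne_bot _)) (.inl (EReal.coe_ne_top _))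
  simp only [OptVal, ← sub_le_iff, le_iInf_iff]
  exact ⟨fun h x hx p => h p x hx, fun h p x hx => h x hx p⟩

variable {A Φ B σ} in
theorem IsAugMult.isAugMult_zero {lam : L} {d : ℝ}
    (h : IsAugMult A Φ B (fun p => (σ p : EReal)) lam) (hd : 0 ≤ d)
    (hBd : ∀ p, -(d * σ p) ≤ B lam p) :
    IsAugMult A Φ B (fun p => (σ p : EReal)) 0 := by
  obtain ⟨r, hr, hlam⟩ := h
  refine ⟨r + d, add_nonneg hr hd, fun p => le_trans ?_ (hlam p)⟩
  simp only [map_zero, LinearMap.zero_apply, EReal.coe_zero, add_zero, ← EReal.coe_mul,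
    sub_eq_add_neg, add_assoc, ← EReal.coe_neg, ← EReal.coe_add]
  gcongr
  linarith [hBd p]

end RealAugmentingFunction

theorem sharp_aug_mult_exists_iff_penalty_exact_general
    {X P L : Type*}
    [NormedAddCommGroup P] [NormedSpace ℝ P]
    [AddCommGroup L] [Module ℝ L]
    (A : Set X) (f : X → EReal) (Φ : X × P → EReal)
    (B : L →ₗ[ℝ] P →ₗ[ℝ] ℝ)
    (hΦ : ∀ x, Φ (x, 0) = f x)
    (hB : ∀ lam : L, ∃ dl : ℝ, 0 ≤ dl ∧ ∀ p : P, |B lam p| ≤ dl * ‖p‖) :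
    (∃ lam : L, IsAugMult A Φ B (fun p => ((‖p‖ : ℝ) : EReal)) lam) ↔
      ∃ r : ℝ, 0 ≤ r ∧ ∀ x ∈ A,
        (⨅ y ∈ A, f y) ≤ ⨅ p : P, Φ (x, p) + (r : EReal) * ((‖p‖ : ℝ) : EReal) := by
  have hv : OptVal A Φ 0 = ⨅ y ∈ A, f y := by simp only [OptVal, hΦ]
  rw [← hv, ← isAugMult_zero_iff A Φ B fun p => ‖p‖]
  refine ⟨fun ⟨lam, hlam⟩ => ?_, fun h => ⟨0, h⟩⟩
  obtain ⟨d, hd, hBd⟩ := hB lam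
  exact hlam.isAugMult_zero hd fun p => (abs_le.mp (hBd p)).1

/-- For the sharp Lagrangian (`σ = ‖·‖`, `P` normed, coupling dominated by the
norm), an augmented Lagrange multiplier exists iff the penalty function
`F(x,r) = inf_p (Φ(x,p) + r ‖p‖)` is exact. -/
theorem sharp_aug_mult_exists_iff_penalty_exact
    {X P L : Type*} [TopologicalSpace X]
    [NormedAddCommGroup P] [NormedSpace ℝ P]
    [AddCommGroup L] [Module ℝ L]
    (A : Set X) (f : X → EReal) (Φ : X × P → EReal)
    (B : L →ₗ[ℝ] P →ₗ[ℝ] ℝ)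
    (hA : A.Nonempty) (hdom : ∃ x ∈ A, f x ≠ ⊤) (hfbot : ∀ x, f x ≠ ⊥)
    (hfin : ∃ c : ℝ, (⨅ x ∈ A, f x) = (c : EReal))
    (hΦ : ∀ x, Φ (x, 0) = f x)
    (hB : ∀ lam : L, ∃ dl : ℝ, 0 ≤ dl ∧ ∀ p : P, |B lam p| ≤ dl * ‖p‖) :
    (∃ lam : L, IsAugMult A Φ B (fun p => ((‖p‖ : ℝ) : EReal)) lam) ↔
      ∃ r : ℝ, 0 ≤ r ∧ ∀ x ∈ A,
        (⨅ y ∈ A, f y) ≤ ⨅ p : P, Φ (x, p) + (r : EReal) * ((‖p‖ : ℝ) : EReal) :=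
  sharp_aug_mult_exists_iff_penalty_exact_general A f Φ B hΦ hB
end
end

section
/- Let P be a normed space, suppose that for every λ ∈ Λ there exists d(λ) ≥ 0 with |⟨λ,p⟩| ≤ d(λ)‖p‖ for all p ∈ P, and let σ(p) = ‖p‖ (the sharp Lagrangian). If there exists an augmented Lagrange multiplier of the problem of minimizing f over A, then every λ ∈ Λ is an augmented Lagrange multiplier of this problem. -/
open Filter Topology Bornology Set

noncomputable section

/-- For the sharp Lagrangian (`σ = ‖·‖`, `P` normed, coupling dominated by the
norm), if an augmented Lagrange multiplier exists, then every `λ ∈ Λ` is an augmented Lagrange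
multiplier. -/
theorem sharp_aug_mult_all_of_exists
    {X P L : Type*} [TopologicalSpace X]
    [NormedAddCommGroup P] [NormedSpace ℝ P]
    [AddCommGroup L] [Module ℝ L]
    (A : Set X) (f : X → EReal) (Φ : X × P → EReal)
    (B : L →ₗ[ℝ] P →ₗ[ℝ] ℝ)
    (hA : A.Nonempty) (hdom : ∃ x ∈ A, f x ≠ ⊤) (hfbot : ∀ x, f x ≠ ⊥)
    (hfin : ∃ c : ℝ, (⨅ x ∈ A, f x) = (c : EReal))
    (hΦ : ∀ x, Φ (x, 0) = f x)
    (hB : ∀ lam : L, ∃ dl : ℝ, 0 ≤ dl ∧ ∀ p : P, |B lam p| ≤ dl * ‖p‖)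
    (hexists : ∃ lam : L, IsAugMult A Φ B (fun p => ((‖p‖ : ℝ) : EReal)) lam) :
    ∀ lam : L, IsAugMult A Φ B (fun p => ((‖p‖ : ℝ) : EReal)) lam := by
  obtain ⟨lam₀, r₀, hr₀, h₀⟩ := hexists
  obtain ⟨c, hc⟩ := hfin
  obtain ⟨d₀, hd₀, hBd₀⟩ := hB lam₀
  intro lam
  obtain ⟨d, hd, hBd⟩ := hB lam
  refine ⟨r₀ + d₀ + d, by positivity, fun p => ?_⟩
  have hv0 : OptVal A Φ 0 = (c : EReal) := by
    rw [show OptVal A Φ 0 = ⨅ x ∈ A, f x from by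
      simp only [OptVal]; exact iInf_congr fun x => iInf_congr fun _ => hΦ x, hc]
  have key : (c : EReal) + ((B lam p : ℝ) : EReal) - ((r₀ + d₀ + d : ℝ) : EReal) * ((‖p‖ : ℝ) : EReal)
      ≤ (c : EReal) + ((B lam₀ p : ℝ) : EReal) - ((r₀ : ℝ) : EReal) * ((‖p‖ : ℝ) : EReal) := by
    rw [← EReal.coe_mul, ← EReal.coe_mul, ← EReal.coe_add, ← EReal.coe_add,
      ← EReal.coe_sub, ← EReal.coe_sub, EReal.coe_le_coe_iff]
    have h1 := abs_le.mp (hBd p)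
    have h2 := abs_le.mp (hBd₀ p)
    nlinarith [norm_nonneg p]
  have h0p := h₀ p
  rw [hv0] at h0p ⊢
  exact key.trans h0p
end
end

section
/- Let P be a normed space, suppose that for every λ ∈ Λ there exists d(λ) ≥ 0 with |⟨λ,p⟩| ≤ d(λ)‖p‖ for all p ∈ P, and that limsup_{p → 0} σ(p)/‖p‖ < +∞. Then for the existence of an augmented Lagrange multiplier of the problem of minimizing f over A it is necessary that there exists a neighbourhood U ⊆ P of zero such that the penalty function F₁(x, r, U) := inf_{p ∈ U} (Φ(x,p) + r‖p‖) is exact, i.e. there exists r ≥ 0 with F₁(x, r, U) ≥ f* for all x ∈ A. -/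
/-! Near zero the limsup bound gives `0 ≤ σ p ≤ M ‖p‖`, and the coupling gives
`⟨λ, p⟩ ≥ -d ‖p‖`. Inserting both into the multiplier inequality
`v p ≥ f* + ⟨λ, p⟩ - r σ p` yields `v p + (d + r M) ‖p‖ ≥ f*`, and `Φ (x, p) ≥ v p` for `x ∈ A`. -/

open Filter Topology Bornology Set

noncomputable section

theorem EReal.coe_le_add_coe_of_coe_le {a b w : ℝ} {y : EReal} (h : (a : EReal) ≤ y)
    (hb : b ≤ a + w) : (b : EReal) ≤ y + w :=
  calc (b : EReal) ≤ ((a + w : ℝ) : EReal) := EReal.coe_le_coe_iff.mpr hb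
    _ = a + w := EReal.coe_add a w
    _ ≤ y + w := add_le_add_left h _

theorem EReal.coe_le_add_of_coe_add_sub_mul_le {c b r u : ℝ} {s y : EReal} (hr : 0 ≤ r)
    (hs : 0 ≤ s) (hsu : s ≤ u) (h : (c : EReal) + b - r * s ≤ y) :
    (c : EReal) ≤ y + ((r * u - b : ℝ) : EReal) := by
  induction s using EReal.rec with
  | bot => exact absurd hs (by simp)
  | top => exact absurd hsu (by simp)
  | coe t =>
    refine EReal.coe_le_add_coe_of_coe_le (a := c + b - r * t) (by exact_mod_cast h) ?_
    have : r * t ≤ r * u := mul_le_mul_of_nonneg_left (EReal.coe_le_coe_iff.mp hsu) hr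
    linarith

theorem exists_eventually_le_mul_norm_of_limsup_lt_top {E : Type*} [NormedAddCommGroup E]
    {g : E → EReal} (hg : limsup (fun p : E => (((‖p‖)⁻¹ : ℝ) : EReal) * g p) (𝓝[≠] 0) < ⊤) :
    ∃ M : ℝ, 0 ≤ M ∧ ∀ᶠ p in 𝓝[≠] (0 : E), g p ≤ ((M * ‖p‖ : ℝ) : EReal) := by
  obtain ⟨M, hM, -⟩ := EReal.exists_between_coe_real hg
  refine ⟨max M 0, le_max_right M 0, ?_⟩
  filter_upwards [eventually_lt_of_limsup_lt hM, self_mem_nhdsWithin] with p hp hp0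
  have hnorm : (0 : EReal) < ‖p‖ := EReal.coe_pos.mpr (norm_pos_iff.mpr hp0)
  rw [EReal.coe_inv, ← EReal.div_eq_inv_mul] at hp
  calc g p ≤ ‖p‖ * M := (EReal.div_le_iff_le_mul hnorm (EReal.coe_ne_top _)).mp hp.le
    _ ≤ ‖p‖ * max M 0 := by gcongr; exact le_max_left M 0
    _ = ((max M 0 * ‖p‖ : ℝ) : EReal) := by rw [mul_comm, EReal.coe_mul]

theorem exists_eventually_nonneg_and_le_mul_norm {E : Type*} [NormedAddCommGroup E]
    {g : E → EReal} (hg0 : g 0 = 0) (hgpos : ∀ p, p ≠ 0 → 0 < g p)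
    (hg : limsup (fun p : E => (((‖p‖)⁻¹ : ℝ) : EReal) * g p) (𝓝[≠] 0) < ⊤) :
    ∃ M : ℝ, 0 ≤ M ∧ ∀ᶠ p in 𝓝 (0 : E), 0 ≤ g p ∧ g p ≤ ((M * ‖p‖ : ℝ) : EReal) := by
  obtain ⟨M, hM, hle⟩ := exists_eventually_le_mul_norm_of_limsup_lt_top hg
  refine ⟨M, hM, ?_⟩
  rw [← nhdsNE_sup_pure, eventually_sup, eventually_pure]
  refine ⟨?_, by simp [hg0]⟩
  filter_upwards [hle, self_mem_nhdsWithin] with p hp hp0 using ⟨(hgpos p hp0).le, hp⟩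

theorem aug_mult_exists_implies_norm_penalty_exact_general
    {X P L : Type*}
    [NormedAddCommGroup P] [NormedSpace ℝ P]
    [AddCommGroup L] [Module ℝ L]
    (A : Set X) (f : X → EReal) (Φ : X × P → EReal)
    (B : L →ₗ[ℝ] P →ₗ[ℝ] ℝ) (σ : P → EReal)
    (hfin : ∃ c : ℝ, (⨅ x ∈ A, f x) = (c : EReal))
    (hΦ : ∀ x, Φ (x, 0) = f x)
    (hσ0 : σ (0 : P) = 0) (hσpos : ∀ p : P, p ≠ 0 → 0 < σ p)
    (hB : ∀ lam : L, ∃ dl : ℝ, 0 ≤ dl ∧ ∀ p : P, |B lam p| ≤ dl * ‖p‖)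
    (hlimsup : Filter.limsup (fun p : P => (((‖p‖)⁻¹ : ℝ) : EReal) * σ p) (𝓝[≠] (0 : P)) < ⊤)
    (hexists : ∃ lam : L, IsAugMult A Φ B σ lam) :
    ∃ U ∈ 𝓝 (0 : P), ∃ r : ℝ, 0 ≤ r ∧ ∀ x ∈ A,
      (⨅ y ∈ A, f y) ≤ ⨅ p ∈ U, Φ (x, p) + (r : EReal) * ((‖p‖ : ℝ) : EReal) := by
  obtain ⟨lam, r, hr, hmult⟩ := hexists
  obtain ⟨d, hd, hBd⟩ := hB lam
  obtain ⟨c, hc⟩ := hfin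
  obtain ⟨M, hM, hσM⟩ := exists_eventually_nonneg_and_le_mul_norm hσ0 hσpos hlimsup
  have hv0 : OptVal A Φ 0 = c := by rw [← hc]; simp only [OptVal, hΦ]
  refine ⟨_, hσM, d + r * M, by positivity, fun x hx => ?_⟩
  rw [hc]
  refine le_iInf₂ fun p ⟨hσp, hσpM⟩ => ?_
  have hBp : r * (M * ‖p‖) - B lam p ≤ (d + r * M) * ‖p‖ := by
    linarith [neg_le_abs (B lam p), hBd p]
  calc (c : EReal) ≤ OptVal A Φ p + ((r * (M * ‖p‖) - B lam p : ℝ) : EReal) :=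
        EReal.coe_le_add_of_coe_add_sub_mul_le hr hσp hσpM (hv0 ▸ hmult p)
    _ ≤ Φ (x, p) + ((d + r * M : ℝ) : EReal) * ((‖p‖ : ℝ) : EReal) := by
        rw [← EReal.coe_mul]
        exact add_le_add (iInf₂_le x hx) (EReal.coe_le_coe_iff.mpr hBp)

/-- Suppose `P` is normed, the coupling is dominated by the norm and
`limsup_{p → 0} σ(p)/‖p‖ < +∞`. Then the existence of an augmented Lagrange multiplier implies
that the penalty function `F₁(x, r, U) = inf_{p ∈ U} (Φ(x,p) + r‖p‖)` is exact for some
neighbourhood `U` of zero. -/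
theorem aug_mult_exists_implies_norm_penalty_exact
    {X P L : Type*} [TopologicalSpace X]
    [NormedAddCommGroup P] [NormedSpace ℝ P]
    [AddCommGroup L] [Module ℝ L]
    (A : Set X) (f : X → EReal) (Φ : X × P → EReal)
    (B : L →ₗ[ℝ] P →ₗ[ℝ] ℝ) (σ : P → EReal)
    (hA : A.Nonempty) (hdom : ∃ x ∈ A, f x ≠ ⊤) (hfbot : ∀ x, f x ≠ ⊥)
    (hfin : ∃ c : ℝ, (⨅ x ∈ A, f x) = (c : EReal))
    (hΦ : ∀ x, Φ (x, 0) = f x)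
    (hσ0 : σ (0 : P) = 0) (hσpos : ∀ p : P, p ≠ 0 → 0 < σ p)
    (hB : ∀ lam : L, ∃ dl : ℝ, 0 ≤ dl ∧ ∀ p : P, |B lam p| ≤ dl * ‖p‖)
    (hlimsup : Filter.limsup (fun p : P => (((‖p‖)⁻¹ : ℝ) : EReal) * σ p) (𝓝[≠] (0 : P)) < ⊤)
    (hexists : ∃ lam : L, IsAugMult A Φ B σ lam) :
    ∃ U ∈ 𝓝 (0 : P), ∃ r : ℝ, 0 ≤ r ∧ ∀ x ∈ A,
      (⨅ y ∈ A, f y) ≤ ⨅ p ∈ U, Φ (x, p) + (r : EReal) * ((‖p‖ : ℝ) : EReal) :=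
  aug_mult_exists_implies_norm_penalty_exact_general A f Φ B σ hfin hΦ hσ0 hσpos hB hlimsup hexists
end
end

section
/- Let {r_n} ⊂ (0, +∞) be an increasing unbounded sequence, {ε_n} ⊂ (0, +∞) a sequence with ε_n → 0, and λ ∈ Λ fixed. Suppose that: (1) A is closed; (2) Φ is lower semicontinuous at every point of A × {0}; (3) the function p ↦ ⟨λ, p⟩ is continuous at the origin; (4) σ has a valley at zero; (5) the function 𝓛(·, λ, r₁) is bounded below on A. Then any cluster point of a sequence {x_n} ⊂ A satisfying 𝓛(x_n, λ, r_n) ≤ inf_{x ∈ A} 𝓛(x, λ, r_n) + ε_n for all n ∈ ℕ is a globally optimal solution of the problem of minimizing f over A. -/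
open Filter Topology Bornology Set

noncomputable section

/-! If `f x₀ < f x*` for some `x₀ ∈ A`, approximate minimality gives
`𝓛(xₙ, λ, rₙ) ≤ f x₀ + εₙ`. But near `x*` and for large `r` the augmented Lagrangian stays above
every level below `f x* = Φ(x*, 0)`: for perturbations `p` near zero this follows from the lower
semicontinuity of `Φ` and the continuity of `⟨λ, ·⟩`, while for `p` away from zero the valley
gives `σ p ≥ δ`, so that their terms in `𝓛(x, λ, r)` are at least
`inf_A 𝓛(·, λ, r₁) + (r - r₁) δ`, which grows without bound. -/

theorem MapClusterPt.frequently_prod {ι α β : Type*} [TopologicalSpace α] {x : α} {F : Filter ι}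
    {G : Filter β} {u : ι → α} {v : ι → β} (hu : MapClusterPt x F u) (hv : Tendsto v F G)
    {p : α × β → Prop} (hp : ∀ᶠ q in 𝓝 x ×ˢ G, p q) : ∃ᶠ i in F, p (u i, v i) := by
  obtain ⟨s, hs, t, ht, hst⟩ := mem_prod_iff.1 hp
  exact ((hu.frequently hs).and_eventually (hv ht)).mono fun i hi => hst ⟨hi.1, hi.2⟩

namespace EReal

theorem add_coe_mul_eq_add_coe_mul_add {a s : EReal} {r₀ r : ℝ} (hr₀ : 0 ≤ r₀)
    (hr : r₀ ≤ r) : a + r * s = a + r₀ * s + (r - r₀ : ℝ) * s := by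
  rw [add_assoc, ← right_distrib_of_nonneg (by exact_mod_cast hr₀)
    (by exact_mod_cast _root_.sub_nonneg.2 hr), ← coe_add, add_sub_cancel]

theorem coe_add_mul_le_add_coe_mul {a s : EReal} {c δ r₀ r : ℝ} (hc : c ≤ a + r₀ * s)
    (hδ : δ ≤ s) (hr₀ : 0 ≤ r₀) (hr : r₀ ≤ r) :
    ((c + (r - r₀) * δ : ℝ) : EReal) ≤ a + r * s := by
  rw [add_coe_mul_eq_add_coe_mul_add hr₀ hr, coe_add, coe_mul]
  exact add_le_add hc (mul_le_mul_of_nonneg_left hδ (by exact_mod_cast _root_.sub_nonneg.2 hr))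

theorem coe_le_sub_add_coe_mul {a b s : EReal} {c β r : ℝ} (ha : (c + β : ℝ) ≤ a) (hb : b ≤ β)
    (hs : 0 ≤ s) (hr : 0 ≤ r) : (c : EReal) ≤ a - b + r * s := by
  have : (c : EReal) ≤ a - b := by
    calc (c : EReal) = ((c + β : ℝ) : EReal) - β := by rw [← coe_sub, _root_.add_sub_cancel_right]
      _ ≤ a - b := sub_le_sub ha hb
  exact le_add_of_le_of_nonneg this (mul_nonneg (by exact_mod_cast hr) hs)

end EReal

section AugmentedLagrangian

variable {X P L : Type*} [AddCommGroup P] [Module ℝ P] [AddCommGroup L] [Module ℝ L]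
  {Φ : X × P → EReal} {B : L →ₗ[ℝ] P →ₗ[ℝ] ℝ} {σ : P → EReal} {lam : L}

theorem augLagr_le_unperturbed (hσ0 : σ 0 = 0) (x : X) (r : ℝ) :
    AugLagr Φ B σ x lam r ≤ Φ (x, 0) :=
  (iInf_le _ 0).trans_eq (by simp [hσ0])

variable [TopologicalSpace X] [TopologicalSpace P] {A : Set X}

theorem eventually_lt_augLagr (hσ : ∀ p, 0 ≤ σ p) {x₀ : X} (hΦ : LowerSemicontinuousAt Φ (x₀, 0))
    (hB : ContinuousAt (fun p => B lam p) 0)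
    (hvalley : ∀ U ∈ 𝓝 (0 : P), ∃ δ : ℝ, 0 < δ ∧ ∀ p ∉ U, (δ : EReal) ≤ σ p)
    {r₀ c₀ : ℝ} (hr₀ : 0 ≤ r₀) (hbdd : ∀ x ∈ A, (c₀ : EReal) ≤ AugLagr Φ B σ x lam r₀)
    {y : EReal} (hy : y < Φ (x₀, 0)) :
    ∀ᶠ q in 𝓝 x₀ ×ˢ atTop, q.1 ∈ A → y < AugLagr Φ B σ q.1 lam q.2 := by
  obtain ⟨c, hyc, hc⟩ := EReal.exists_between_coe_real hy
  obtain ⟨d, hcd, hd⟩ := EReal.exists_between_coe_real hc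
  obtain ⟨W, hW, V, hV, hWV⟩ := mem_nhds_prod_iff.1 (hΦ d hd)
  have hV' : ∀ᶠ p in 𝓝 (0 : P), B lam p < d - c :=
    hB.eventually (gt_mem_nhds (by simpa using EReal.coe_lt_coe_iff.1 hcd))
  obtain ⟨δ, hδ, hσδ⟩ := hvalley _ (inter_mem hV hV')
  have hfar : ∀ᶠ r in atTop, r₀ ≤ r ∧ c ≤ c₀ + (r - r₀) * δ :=
    (eventually_ge_atTop r₀).and <| (tendsto_atTop_add_const_left _ c₀
      ((tendsto_atTop_add_const_right _ (-r₀) tendsto_id).atTop_mul_const hδ)).eventually_ge_atTop c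
  filter_upwards [prod_mem_prod hW hfar] with ⟨x, r⟩ ⟨hxW, hr₀r, hcr⟩ hxA
  refine hyc.trans_le (le_iInf fun p => ?_)
  by_cases hp : p ∈ V ∩ {p | B lam p < d - c}
  · exact EReal.coe_le_sub_add_coe_mul (β := d - c) (by simpa using (hWV ⟨hxW, hp.1⟩).le)
      (EReal.coe_le_coe_iff.2 hp.2.le) (hσ p) (hr₀.trans hr₀r)
  · exact (EReal.coe_le_coe_iff.2 hcr).trans <| EReal.coe_add_mul_le_add_coe_mul
      ((hbdd x hxA).trans (iInf_le _ p)) (hσδ p hp) hr₀ hr₀r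

end AugmentedLagrangian

theorem clusterPt_of_approx_minimizers_is_optimal_general
    {X P L : Type*} [TopologicalSpace X]
    [AddCommGroup P] [Module ℝ P] [TopologicalSpace P]
    [AddCommGroup L] [Module ℝ L]
    (A : Set X) (f : X → EReal) (Φ : X × P → EReal)
    (B : L →ₗ[ℝ] P →ₗ[ℝ] ℝ) (σ : P → EReal)
    (hΦ : ∀ x, Φ (x, 0) = f x)
    (hσ0 : σ (0 : P) = 0) (hσpos : ∀ p : P, p ≠ 0 → 0 < σ p)
    (lam : L)
    (rs : ℕ → ℝ) (hrs_pos : ∀ n, 0 < rs n)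
    (hrs_unbdd : Tendsto rs atTop atTop)
    (eps : ℕ → ℝ) (heps : Tendsto eps atTop (𝓝 (0 : ℝ)))
    (hAclosed : IsClosed A)
    (hΦlsc : ∀ x ∈ A, LowerSemicontinuousAt Φ (x, (0 : P)))
    (hBcont : ContinuousAt (fun p : P => (B lam p : ℝ)) (0 : P))
    (hvalley : ∀ U ∈ 𝓝 (0 : P), ∃ δ : ℝ, 0 < δ ∧ ∀ p ∉ U, (δ : EReal) ≤ σ p)
    (hbdd : ∃ c : ℝ, ∀ x ∈ A, (c : EReal) ≤ AugLagr Φ B σ x lam (rs 0))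
    (xs : ℕ → X) (hxsA : ∀ n, xs n ∈ A)
    (hxs_min : ∀ n, AugLagr Φ B σ (xs n) lam (rs n) ≤
      (⨅ x ∈ A, AugLagr Φ B σ x lam (rs n)) + ((eps n : ℝ) : EReal))
    (xstar : X) (hcluster : MapClusterPt xstar atTop xs) :
    xstar ∈ A ∧ ∀ x ∈ A, f xstar ≤ f x := by
  have hσ : ∀ p, 0 ≤ σ p := fun p => by
    rcases eq_or_ne p 0 with rfl | hp
    exacts [hσ0.ge, (hσpos p hp).le]
  have hmem : xstar ∈ A := hAclosed.mem_of_mapClusterPt hcluster (.of_forall hxsA)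
  refine ⟨hmem, fun x₀ hx₀ => ?_⟩
  by_contra! hlt
  obtain ⟨a, hfa, ha⟩ := EReal.exists_between_coe_real hlt
  obtain ⟨b, hab, hb⟩ := EReal.exists_between_coe_real ha
  obtain ⟨c₀, hc₀⟩ := hbdd
  have hnear := eventually_lt_augLagr hσ (hΦlsc xstar hmem) hBcont hvalley (hrs_pos 0).le hc₀
    (y := b) (by rwa [hΦ])
  have hsmall : ∀ᶠ n in atTop, eps n < b - a :=
    heps.eventually (gt_mem_nhds (sub_pos.2 (EReal.coe_lt_coe_iff.1 hab)))
  obtain ⟨n, hbn, hεn⟩ := ((hcluster.frequently_prod hrs_unbdd hnear).and_eventually hsmall).exists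
  refine (hbn (hxsA n)).not_ge ?_
  calc AugLagr Φ B σ (xs n) lam (rs n)
      ≤ (⨅ x ∈ A, AugLagr Φ B σ x lam (rs n)) + ((eps n : ℝ) : EReal) := hxs_min n
    _ ≤ f x₀ + ((eps n : ℝ) : EReal) :=
      add_le_add_left ((iInf₂_le x₀ hx₀).trans (hΦ x₀ ▸ augLagr_le_unperturbed hσ0 x₀ (rs n))) _
    _ ≤ ((a + eps n : ℝ) : EReal) := by rw [EReal.coe_add]; exact add_le_add_left hfa.le _
    _ ≤ b := EReal.coe_le_coe_iff.2 (by linarith)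

/-- Any cluster point of a sequence of `ε_n`-minimizers of
`𝓛(·, λ, r_n)` on `A`, for an increasing unbounded sequence `r_n`, is a globally optimal
solution of the problem of minimizing `f` over `A`. -/
theorem clusterPt_of_approx_minimizers_is_optimal
    {X P L : Type*} [TopologicalSpace X]
    [AddCommGroup P] [Module ℝ P] [TopologicalSpace P]
    [AddCommGroup L] [Module ℝ L]
    (A : Set X) (f : X → EReal) (Φ : X × P → EReal)
    (B : L →ₗ[ℝ] P →ₗ[ℝ] ℝ) (σ : P → EReal)
    (hA : A.Nonempty) (hdom : ∃ x ∈ A, f x ≠ ⊤) (hfbot : ∀ x, f x ≠ ⊥)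
    (hfin : ∃ c : ℝ, (⨅ x ∈ A, f x) = (c : EReal))
    (hΦ : ∀ x, Φ (x, 0) = f x)
    (hσ0 : σ (0 : P) = 0) (hσpos : ∀ p : P, p ≠ 0 → 0 < σ p)
    (lam : L)
    (rs : ℕ → ℝ) (hrs_pos : ∀ n, 0 < rs n) (hrs_mono : StrictMono rs)
    (hrs_unbdd : Tendsto rs atTop atTop)
    (eps : ℕ → ℝ) (heps_pos : ∀ n, 0 < eps n) (heps : Tendsto eps atTop (𝓝 (0 : ℝ)))
    (hAclosed : IsClosed A)
    (hΦlsc : ∀ x ∈ A, LowerSemicontinuousAt Φ (x, (0 : P)))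
    (hBcont : ContinuousAt (fun p : P => (B lam p : ℝ)) (0 : P))
    (hvalley : ∀ U ∈ 𝓝 (0 : P), ∃ δ : ℝ, 0 < δ ∧ ∀ p ∉ U, (δ : EReal) ≤ σ p)
    (hbdd : ∃ c : ℝ, ∀ x ∈ A, (c : EReal) ≤ AugLagr Φ B σ x lam (rs 0))
    (xs : ℕ → X) (hxsA : ∀ n, xs n ∈ A)
    (hxs_min : ∀ n, AugLagr Φ B σ (xs n) lam (rs n) ≤
      (⨅ x ∈ A, AugLagr Φ B σ x lam (rs n)) + ((eps n : ℝ) : EReal))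
    (xstar : X) (hcluster : MapClusterPt xstar atTop xs) :
    xstar ∈ A ∧ ∀ x ∈ A, f xstar ≤ f x :=
  clusterPt_of_approx_minimizers_is_optimal_general A f Φ B σ hΦ hσ0 hσpos lam rs hrs_pos hrs_unbdd
    eps heps hAclosed hΦlsc hBcont hvalley hbdd xs hxsA hxs_min xstar hcluster
end
end
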